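/- Let p be a prime. The function field Cohen–Lenstra probability weights P(r) = p^{-r²} · η_∞(p) · ∏_{k=1}^{r} (1 - p^{-k})^{-2}, where η_∞(p) = ∏_{k≥1}(1 - p^{-k}), satisfy ∑_{r=0}^{∞} P(r) = 1. -/

import Mathlib

/-!
With `q = 1/p`, the Gaussian binomials `[n, k]_q` satisfy the q-Vandermonde identity
`[2n, n]_q = ∑ₖ q^{k²} [n, k]_q²`. As `n → ∞`, `[n, k]_q → 1/(q;q)_k` and
`[2n, n]_q → 1/(q;q)_∞`, while the terms stay below a fixed multiple of `q^k`, so Tannery's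
theorem gives `∑ₖ q^{k²}/(q;q)_k² = 1/(q;q)_∞ = 1/η_∞(p)`.
-/

open Finset

variable {R : Type*}

def qPochhammer [CommRing R] (q : R) (n : ℕ) : R := ∏ i ∈ range n, (1 - q ^ (i + 1))

def qBinomial [CommSemiring R] (q : R) : ℕ → ℕ → R
  | _, 0 => 1
  | 0, _ + 1 => 0
  | n + 1, k + 1 => qBinomial q n k + q ^ (k + 1) * qBinomial q n (k + 1)

section CommSemiring

variable [CommSemiring R] (q : R)

@[simp]
lemma qBinomial_zero_right (n : ℕ) : qBinomial q n 0 = 1 := by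
  cases n <;> rfl

lemma qBinomial_succ_succ (n k : ℕ) :
    qBinomial q (n + 1) (k + 1) = qBinomial q n k + q ^ (k + 1) * qBinomial q n (k + 1) :=
  rfl

lemma qBinomial_eq_zero_of_lt : ∀ {n k : ℕ}, n < k → qBinomial q n k = 0
  | 0, _ + 1, _ => rfl
  | _ + 1, _ + 1, h => by
    rw [qBinomial_succ_succ, qBinomial_eq_zero_of_lt (by omega),
      qBinomial_eq_zero_of_lt (by omega), mul_zero, add_zero]

@[simp]
lemma qBinomial_self : ∀ n : ℕ, qBinomial q n n = 1
  | 0 => rfl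
  | n + 1 => by
    rw [qBinomial_succ_succ, qBinomial_self n, qBinomial_eq_zero_of_lt q n.lt_succ_self,
      mul_zero, add_zero]

/-- q-Vandermonde. The exponent counts pairs (chosen element of the first block, unchosen element
of the second block); the truncated `n - ij.2` is harmless since `[n, j]_q = 0` for `j > n`. -/
theorem qBinomial_add (m n k : ℕ) :
    qBinomial q (m + n) k =
      ∑ ij ∈ antidiagonal k, qBinomial q m ij.1 * qBinomial q n ij.2 * q ^ (ij.1 * (n - ij.2)) := by
  induction n generalizing k with
  | zero =>
    cases k with
    | zero => simp
    | succ k => simp [Nat.sum_antidiagonal_succ', qBinomial]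
  | succ n ih =>
    cases k with
    | zero => simp
    | succ k =>
      have shift : ∀ ij ∈ antidiagonal k,
          q ^ (k + 1) * (qBinomial q m ij.1 * qBinomial q n (ij.2 + 1) *
            q ^ (ij.1 * (n - (ij.2 + 1)))) =
          qBinomial q m ij.1 * (q ^ (ij.2 + 1) * qBinomial q n (ij.2 + 1)) *
            q ^ (ij.1 * (n - ij.2)) := by
        rintro ⟨i, j⟩ hij
        rw [HasAntidiagonal.mem_antidiagonal] at hij
        rcases lt_or_ge n (j + 1) with hn | hn
        · simp [qBinomial_eq_zero_of_lt q hn]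
        · obtain ⟨d, rfl⟩ := Nat.exists_eq_add_of_le hn
          rw [← hij, show j + 1 + d - (j + 1) = d by omega, show j + 1 + d - j = d + 1 by omega]
          ring
      rw [← add_assoc, qBinomial_succ_succ, ih, ih, Nat.sum_antidiagonal_succ',
        Nat.sum_antidiagonal_succ', mul_add, mul_sum, sum_congr rfl shift]
      simp only [qBinomial_succ_succ, qBinomial_zero_right, Nat.sub_zero, Nat.add_sub_add_right,
        add_mul, mul_add, sum_add_distrib]
      ring

end CommSemiring

section CommRing

variable [CommRing R] (q : R)

lemma qPochhammer_succ (n : ℕ) : qPochhammer q (n + 1) = qPochhammer q n * (1 - q ^ (n + 1)) :=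
  prod_range_succ _ n

lemma qPochhammer_eq_prod_Icc (n : ℕ) :
    qPochhammer q n = ∏ k ∈ Icc 1 n, (1 - q ^ k) := by
  rw [qPochhammer, range_eq_Ico, prod_Ico_add' (fun k ↦ 1 - q ^ k), zero_add,
    Ico_add_one_right_eq_Icc]

theorem qBinomial_mul_qPochhammer_mul_qPochhammer :
    ∀ k l : ℕ, qBinomial q (k + l) k * qPochhammer q k * qPochhammer q l = qPochhammer q (k + l)
  | 0, l => by simp [qPochhammer]
  | k + 1, 0 => by simp [qPochhammer]
  | k + 1, l + 1 => by
    have h₁ := qBinomial_mul_qPochhammer_mul_qPochhammer k (l + 1)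
    have h₂ := qBinomial_mul_qPochhammer_mul_qPochhammer (k + 1) l
    rw [← add_assoc] at h₁
    rw [add_right_comm k 1 l] at h₂
    rw [show k + 1 + (l + 1) = k + l + 1 + 1 by ring, qBinomial_succ_succ,
      qPochhammer_succ q (k + l + 1)]
    rw [qPochhammer_succ q k] at h₂ ⊢
    rw [qPochhammer_succ q l] at h₁ ⊢
    linear_combination (1 - q ^ (k + 1)) * h₁ + q ^ (k + 1) * (1 - q ^ (l + 1)) * h₂

end CommRing

section IsDomain

variable [CommRing R] [IsDomain R] {q : R} (hq : ∀ n : ℕ, q ^ (n + 1) ≠ 1)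
include hq

lemma qPochhammer_ne_zero (n : ℕ) : qPochhammer q n ≠ 0 :=
  prod_ne_zero_iff.mpr fun i _ ↦ sub_ne_zero.mpr (hq i).symm

lemma qBinomial_symm (k l : ℕ) : qBinomial q (k + l) l = qBinomial q (k + l) k := by
  apply mul_right_cancel₀ (mul_ne_zero (qPochhammer_ne_zero hq k) (qPochhammer_ne_zero hq l))
  have h₁ := qBinomial_mul_qPochhammer_mul_qPochhammer q l k
  have h₂ := qBinomial_mul_qPochhammer_mul_qPochhammer q k l
  rw [add_comm l k] at h₁
  linear_combination h₁ - h₂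

theorem qBinomial_add_self (n : ℕ) :
    qBinomial q (n + n) n = ∑ k ∈ range (n + 1), qBinomial q n k ^ 2 * q ^ (k ^ 2) := by
  rw [qBinomial_add,
    ← Nat.sum_antidiagonal_eq_sum_range_succ fun k _ ↦ qBinomial q n k ^ 2 * q ^ (k ^ 2)]
  refine sum_congr rfl fun ⟨i, j⟩ hij ↦ ?_
  rw [HasAntidiagonal.mem_antidiagonal] at hij
  subst hij
  rw [Nat.add_sub_cancel, qBinomial_symm hq]
  ring

end IsDomain

lemma qBinomial_eq_div {K : Type*} [Field K] {q : K} (hq : ∀ n : ℕ, q ^ (n + 1) ≠ 1) (k l : ℕ) :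
    qBinomial q (k + l) k = qPochhammer q (k + l) / (qPochhammer q k * qPochhammer q l) := by
  rw [eq_div_iff (mul_ne_zero (qPochhammer_ne_zero hq k) (qPochhammer_ne_zero hq l)),
    ← mul_assoc, qBinomial_mul_qPochhammer_mul_qPochhammer]

section Real

open Filter Topology

variable {q : ℝ} (hq0 : 0 ≤ q) (hq1 : q < 1)
include hq0 hq1

lemma one_sub_pow_succ_pos (i : ℕ) : 0 < 1 - q ^ (i + 1) :=
  sub_pos.2 (pow_lt_one₀ hq0 hq1 i.succ_ne_zero)

lemma pow_succ_ne_one (i : ℕ) : q ^ (i + 1) ≠ 1 :=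
  (pow_lt_one₀ hq0 hq1 i.succ_ne_zero).ne

lemma qPochhammer_pos (n : ℕ) : 0 < qPochhammer q n :=
  prod_pos fun i _ ↦ one_sub_pow_succ_pos hq0 hq1 i

lemma qPochhammer_antitone : Antitone (qPochhammer q) :=
  antitone_nat_of_succ_le fun n ↦ by
    rw [qPochhammer_succ]
    exact mul_le_of_le_one_right (qPochhammer_pos hq0 hq1 n).le
      (sub_le_self _ (pow_nonneg hq0 _))

lemma qPochhammer_le_one (n : ℕ) : qPochhammer q n ≤ 1 :=
  (qPochhammer_antitone hq0 hq1 n.zero_le).trans_eq (prod_range_zero _)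

lemma summable_neg_pow_succ : Summable fun i : ℕ ↦ -q ^ (i + 1) := by
  simpa [pow_succ] using ((summable_geometric_of_lt_one hq0 hq1).mul_right q).neg

lemma tendsto_qPochhammer :
    Tendsto (qPochhammer q) atTop (𝓝 (∏' i : ℕ, (1 - q ^ (i + 1)))) := by
  simp_rw [sub_eq_add_neg]
  exact (Real.multipliable_one_add_of_summable
    (summable_neg_pow_succ hq0 hq1)).hasProd.tendsto_prod_nat

lemma tprod_one_sub_pow_succ_pos : 0 < ∏' i : ℕ, (1 - q ^ (i + 1)) := by
  rw [← Real.rexp_tsum_eq_tprod (one_sub_pow_succ_pos hq0 hq1)]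
  · exact Real.exp_pos _
  · simpa [sub_eq_add_neg] using
      Real.summable_log_one_add_of_summable (summable_neg_pow_succ hq0 hq1)

lemma tprod_le_qPochhammer (n : ℕ) : ∏' i : ℕ, (1 - q ^ (i + 1)) ≤ qPochhammer q n :=
  (qPochhammer_antitone hq0 hq1).le_of_tendsto (tendsto_qPochhammer hq0 hq1) n

lemma abs_qBinomial_le (n k : ℕ) :
    |qBinomial q n k| ≤ ((∏' i : ℕ, (1 - q ^ (i + 1))) ^ 2)⁻¹ := by
  have hη := tprod_one_sub_pow_succ_pos hq0 hq1
  rcases lt_or_ge n k with hnk | hkn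
  · rw [qBinomial_eq_zero_of_lt q hnk, abs_zero]
    positivity
  obtain ⟨l, rfl⟩ := Nat.exists_eq_add_of_le hkn
  have hk := qPochhammer_pos hq0 hq1 k
  have hl := qPochhammer_pos hq0 hq1 l
  rw [qBinomial_eq_div (pow_succ_ne_one hq0 hq1),
    abs_of_pos (div_pos (qPochhammer_pos hq0 hq1 _) (mul_pos hk hl)), sq, ← one_div]
  exact div_le_div₀ zero_le_one (qPochhammer_le_one hq0 hq1 _) (by positivity)
    (mul_le_mul (tprod_le_qPochhammer hq0 hq1 k) (tprod_le_qPochhammer hq0 hq1 l) hη.le hk.le)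

lemma tendsto_qBinomial (k : ℕ) :
    Tendsto (fun n ↦ qBinomial q n k) atTop (𝓝 (qPochhammer q k)⁻¹) := by
  have hη := (tprod_one_sub_pow_succ_pos hq0 hq1).ne'
  have hk := (qPochhammer_pos hq0 hq1 k).ne'
  rw [← tendsto_add_atTop_iff_nat k]
  have h := ((tendsto_qPochhammer hq0 hq1).comp (tendsto_add_atTop_nat k)).div
    ((tendsto_qPochhammer hq0 hq1).const_mul (qPochhammer q k)) (mul_ne_zero hk hη)
  rw [mul_comm, ← div_div, div_self hη, one_div] at h
  refine h.congr fun l ↦ ?_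
  rw [Pi.div_apply, Function.comp_apply, add_comm l k, qBinomial_eq_div (pow_succ_ne_one hq0 hq1)]

lemma tendsto_qBinomial_add_self :
    Tendsto (fun n ↦ qBinomial q (n + n) n) atTop (𝓝 (∏' i : ℕ, (1 - q ^ (i + 1)))⁻¹) := by
  have hη := (tprod_one_sub_pow_succ_pos hq0 hq1).ne'
  have h := ((tendsto_qPochhammer hq0 hq1).comp (tendsto_id.atTop_add_atTop tendsto_id)).div
    ((tendsto_qPochhammer hq0 hq1).mul (tendsto_qPochhammer hq0 hq1)) (mul_ne_zero hη hη)
  rw [← div_div, div_self hη, one_div] at h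
  exact h.congr fun n ↦ (qBinomial_eq_div (pow_succ_ne_one hq0 hq1) n n).symm

theorem tsum_pow_sq_div_qPochhammer_sq :
    ∑' k : ℕ, q ^ (k ^ 2) / qPochhammer q k ^ 2 = (∏' i : ℕ, (1 - q ^ (i + 1)))⁻¹ := by
  have hsum : ∀ n, ∑' k, qBinomial q n k ^ 2 * q ^ (k ^ 2) = qBinomial q (n + n) n := fun n ↦ by
    rw [qBinomial_add_self (pow_succ_ne_one hq0 hq1), tsum_eq_sum (s := range (n + 1))]
    intro k hk
    rw [qBinomial_eq_zero_of_lt q (by simpa using hk), zero_pow two_ne_zero, zero_mul]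
  have hbound : ∀ n k, ‖qBinomial q n k ^ 2 * q ^ (k ^ 2)‖ ≤
      (((∏' i : ℕ, (1 - q ^ (i + 1))) ^ 2)⁻¹) ^ 2 * q ^ k := fun n k ↦ by
    rw [norm_mul, norm_pow, norm_pow, Real.norm_eq_abs, Real.norm_of_nonneg hq0]
    exact mul_le_mul (pow_le_pow_left₀ (abs_nonneg _) (abs_qBinomial_le hq0 hq1 n k) 2)
      (pow_le_pow_of_le_one hq0 hq1.le (Nat.le_self_pow two_ne_zero k)) (by positivity)
      (by positivity)
  have hlim := tendsto_tsum_of_dominated_convergence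
    ((summable_geometric_of_lt_one hq0 hq1).mul_left _)
    (fun k ↦ ((tendsto_qBinomial hq0 hq1 k).pow 2).mul_const (q ^ (k ^ 2)))
    (Eventually.of_forall hbound)
  simp_rw [div_eq_inv_mul, ← inv_pow]
  exact tendsto_nhds_unique (hlim.congr hsum) (tendsto_qBinomial_add_self hq0 hq1)

end Real

/-- The Friedman–Washington / Cohen–Lenstra probability weights
`P(r) = p^{-r²} · η_∞(p) · ∏_{k=1}^{r} (1 - p^{-k})^{-2}`, where
`η_∞(p) = ∏_{k≥1}(1 - p^{-k})`, sum to 1 over all `r ≥ 0`. -/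
theorem cohen_lenstra_weights_sum (p : ℕ) (hp : p.Prime) :
    ∑' r : ℕ, ((p : ℝ) ^ (-(r ^ 2 : ℤ)) *
      (∏' k : ℕ, (1 - (p : ℝ) ^ (-((k : ℤ) + 1)))) *
      ∏ k ∈ Finset.Icc 1 r, ((1 - (p : ℝ) ^ (-(k : ℤ)))⁻¹) ^ 2) = 1 := by
  have hq0 : 0 ≤ (p : ℝ)⁻¹ := by positivity
  have hq1 : (p : ℝ)⁻¹ < 1 := inv_lt_one_of_one_lt₀ (by exact_mod_cast hp.one_lt)
  have hzpow (m : ℕ) : (p : ℝ) ^ (-(m : ℤ)) = (p : ℝ)⁻¹ ^ m := by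
    rw [zpow_neg, zpow_natCast, inv_pow]
  have hterm (r : ℕ) : (p : ℝ) ^ (-(r ^ 2 : ℤ)) *
      (∏' k : ℕ, (1 - (p : ℝ) ^ (-((k : ℤ) + 1)))) *
      ∏ k ∈ Finset.Icc 1 r, ((1 - (p : ℝ) ^ (-(k : ℤ)))⁻¹) ^ 2 =
      (∏' k : ℕ, (1 - (p : ℝ)⁻¹ ^ (k + 1))) *
        ((p : ℝ)⁻¹ ^ (r ^ 2) / qPochhammer (p : ℝ)⁻¹ r ^ 2) := by
    have hsq : -(r ^ 2 : ℤ) = -((r ^ 2 : ℕ) : ℤ) := by push_cast; rfl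
    have hsucc (k : ℕ) : -((k : ℤ) + 1) = -((k + 1 : ℕ) : ℤ) := by push_cast; rfl
    simp_rw [hsq, hsucc, hzpow, qPochhammer_eq_prod_Icc, prod_pow, prod_inv_distrib]
    ring
  rw [tsum_congr hterm, tsum_mul_left, tsum_pow_sq_div_qPochhammer_sq hq0 hq1,
    mul_inv_cancel₀ (tprod_one_sub_pow_succ_pos hq0 hq1).ne']
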